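/- arXiv:1908.00383 — 3 statements merged into one kernel-verified Lean document; each statement's English description precedes it below -/
import Mathlib

section
/- Let p be an odd prime and t an integer with t ≢ 0 (mod p) and t⁴ - 2(a+b)t² + (a-b)² ≡ 0 (mod p). Then r = (t² + a - b)·(2t)⁻¹ (mod p) satisfies r² ≡ a (mod p). -/
theorem sq_mul_eq_of_quartic_eq_zero {R : Type*} [CommRing R] {a b t u : R}
    (hf : t ^ 4 - 2 * (a + b) * t ^ 2 + (a - b) ^ 2 = 0) (hu : 2 * t * u = 1) :
    ((t ^ 2 + a - b) * u) ^ 2 = a :=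
  calc ((t ^ 2 + a - b) * u) ^ 2
      = (t ^ 4 - 2 * (a + b) * t ^ 2 + (a - b) ^ 2) * u ^ 2 + a * (2 * t * u) ^ 2 := by ring
    _ = a := by rw [hf, hu]; ring

theorem r_is_sqrt_a_general (p : ℕ) (a b t u : ℤ)
    (hf : t ^ 4 - 2 * (a + b) * t ^ 2 + (a - b) ^ 2 ≡ 0 [ZMOD (p : ℤ)])
    (hu : 2 * t * u ≡ 1 [ZMOD (p : ℤ)]) :
    ((t ^ 2 + a - b) * u) ^ 2 ≡ a [ZMOD (p : ℤ)] := by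
  rw [← ZMod.intCast_eq_intCast_iff] at hf hu ⊢
  push_cast at hf hu ⊢
  exact sq_mul_eq_of_quartic_eq_zero hf hu

theorem r_is_sqrt_a (p : ℕ) (hp : p.Prime) (hodd : p ≠ 2) (a b t u : ℤ)
    (ht : ¬ (p : ℤ) ∣ t)
    (hf : t ^ 4 - 2 * (a + b) * t ^ 2 + (a - b) ^ 2 ≡ 0 [ZMOD (p : ℤ)])
    (hu : 2 * t * u ≡ 1 [ZMOD (p : ℤ)]) :
    ((t ^ 2 + a - b) * u) ^ 2 ≡ a [ZMOD (p : ℤ)] :=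
  r_is_sqrt_a_general p a b t u hf hu
end

section
/- Let p be an odd prime and t an integer with t ≢ 0 (mod p) and t⁴ - 2(a+b)t² + (a-b)² ≡ 0 (mod p). Then s = (t² - a + b)·(2t)⁻¹ (mod p) satisfies s² ≡ b (mod p), and moreover r + s ≡ t (mod p) where r = (t² + a - b)·(2t)⁻¹. -/
/-!
Put `u = (2t)⁻¹`. Since `(t² - a + b)² - 4bt² = t⁴ - 2(a + b)t² + (a - b)²`, the square of
`s = (t² - a + b)u` differs from `b` by `u²` times the biquadratic evaluated at `t`, which vanishes;
and `r + s = 2t²u = t`. Both identities hold in any commutative ring, in particular in `ZMod p`.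
-/

section CommRing

variable {R : Type*} [CommRing R] {a b t u : R}

theorem sq_mul_eq_of_biquadratic_eq_zero (hf : t ^ 4 - 2 * (a + b) * t ^ 2 + (a - b) ^ 2 = 0)
    (hu : 2 * t * u = 1) : ((t ^ 2 - a + b) * u) ^ 2 = b := by
  linear_combination u ^ 2 * hf + b * (1 + 2 * t * u) * hu

theorem add_mul_add_sub_mul_eq_of_two_mul_mul_eq_one (hu : 2 * t * u = 1) :
    (t ^ 2 + a - b) * u + (t ^ 2 - a + b) * u = t := by
  linear_combination t * hu

end CommRing

theorem s_is_sqrt_b_and_sum_general (p : ℕ) (a b t u : ℤ)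
    (hf : t ^ 4 - 2 * (a + b) * t ^ 2 + (a - b) ^ 2 ≡ 0 [ZMOD (p : ℤ)])
    (hu : 2 * t * u ≡ 1 [ZMOD (p : ℤ)]) :
    ((t ^ 2 - a + b) * u) ^ 2 ≡ b [ZMOD (p : ℤ)] ∧
      (t ^ 2 + a - b) * u + (t ^ 2 - a + b) * u ≡ t [ZMOD (p : ℤ)] := by
  simp only [← ZMod.intCast_eq_intCast_iff] at hf hu ⊢
  push_cast at hf hu ⊢
  exact ⟨sq_mul_eq_of_biquadratic_eq_zero hf hu, add_mul_add_sub_mul_eq_of_two_mul_mul_eq_one hu⟩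

theorem s_is_sqrt_b_and_sum (p : ℕ) (hp : p.Prime) (hodd : p ≠ 2) (a b t u : ℤ)
    (ht : ¬ (p : ℤ) ∣ t)
    (hf : t ^ 4 - 2 * (a + b) * t ^ 2 + (a - b) ^ 2 ≡ 0 [ZMOD (p : ℤ)])
    (hu : 2 * t * u ≡ 1 [ZMOD (p : ℤ)]) :
    ((t ^ 2 - a + b) * u) ^ 2 ≡ b [ZMOD (p : ℤ)] ∧
      (t ^ 2 + a - b) * u + (t ^ 2 - a + b) * u ≡ t [ZMOD (p : ℤ)] :=
  s_is_sqrt_b_and_sum_general p a b t u hf hu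
end

section
/- Let p be an odd prime, t ≢ 0 (mod p) with t⁴ - 2(a+b)t² + (a-b)² ≡ 0 (mod p). Suppose r, s, r', s' are integers with r² ≡ r'² ≡ a, s² ≡ s'² ≡ b (mod p), and r + s ≡ r' + s' ≡ t (mod p). Then r ≡ r' and s ≡ s' (mod p). -/
/-!
If `r ^ 2 = a`, `s ^ 2 = b` and `r + s = t`, then eliminating `s = t - r` from `s ^ 2 = b` leaves
the linear equation `2 t r = t ^ 2 + a - b` in `r`. When `2 t` is invertible mod `p` this pins down
`r`, and then `s = t - r`.
-/

theorem two_mul_mul_eq_of_sq_eq_of_add_eq {R : Type*} [CommRing R] {a b t r s : R}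
    (hr : r ^ 2 = a) (hs : s ^ 2 = b) (hsum : r + s = t) :
    2 * t * r = t ^ 2 + a - b := by
  subst hr hs hsum
  ring

theorem eq_and_eq_of_sq_eq_of_add_eq {R : Type*} [CommRing R] [IsDomain R] [NeZero (2 : R)]
    {a b t r s r' s' : R} (ht : t ≠ 0)
    (hr : r ^ 2 = a) (hr' : r' ^ 2 = a) (hs : s ^ 2 = b) (hs' : s' ^ 2 = b)
    (hsum : r + s = t) (hsum' : r' + s' = t) :
    r = r' ∧ s = s' := by
  have hrr' : r = r' := mul_left_cancel₀ (mul_ne_zero two_ne_zero ht) <|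
    (two_mul_mul_eq_of_sq_eq_of_add_eq hr hs hsum).trans
      (two_mul_mul_eq_of_sq_eq_of_add_eq hr' hs' hsum').symm
  exact ⟨hrr', by linear_combination hsum - hsum' - hrr'⟩

theorem ZMod.neZero_two_of_prime {p : ℕ} (hp : p.Prime) (hodd : p ≠ 2) : NeZero (2 : ZMod p) := by
  refine ⟨fun h => hodd ?_⟩
  rw [← Nat.cast_ofNat, ZMod.natCast_eq_zero_iff] at h
  exact (Nat.prime_dvd_prime_iff_eq hp Nat.prime_two).mp h

theorem decomposition_unique_general (p : ℕ) (hp : p.Prime) (hodd : p ≠ 2) (a b t r s r' s' : ℤ)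
    (ht : ¬ (p : ℤ) ∣ t)
    (hr : r ^ 2 ≡ a [ZMOD (p : ℤ)]) (hr' : r' ^ 2 ≡ a [ZMOD (p : ℤ)])
    (hs : s ^ 2 ≡ b [ZMOD (p : ℤ)]) (hs' : s' ^ 2 ≡ b [ZMOD (p : ℤ)])
    (hsum : r + s ≡ t [ZMOD (p : ℤ)]) (hsum' : r' + s' ≡ t [ZMOD (p : ℤ)]) :
    r ≡ r' [ZMOD (p : ℤ)] ∧ s ≡ s' [ZMOD (p : ℤ)] := by
  have : Fact p.Prime := ⟨hp⟩
  have := ZMod.neZero_two_of_prime hp hodd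
  simp only [← ZMod.intCast_eq_intCast_iff, Int.cast_pow, Int.cast_add]
    at hr hr' hs hs' hsum hsum' ⊢
  exact eq_and_eq_of_sq_eq_of_add_eq (mt (ZMod.intCast_zmod_eq_zero_iff_dvd t p).mp ht)
    hr hr' hs hs' hsum hsum'

theorem decomposition_unique (p : ℕ) (hp : p.Prime) (hodd : p ≠ 2) (a b t r s r' s' : ℤ)
    (ht : ¬ (p : ℤ) ∣ t)
    (hf : t ^ 4 - 2 * (a + b) * t ^ 2 + (a - b) ^ 2 ≡ 0 [ZMOD (p : ℤ)])
    (hr : r ^ 2 ≡ a [ZMOD (p : ℤ)]) (hr' : r' ^ 2 ≡ a [ZMOD (p : ℤ)])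
    (hs : s ^ 2 ≡ b [ZMOD (p : ℤ)]) (hs' : s' ^ 2 ≡ b [ZMOD (p : ℤ)])
    (hsum : r + s ≡ t [ZMOD (p : ℤ)]) (hsum' : r' + s' ≡ t [ZMOD (p : ℤ)]) :
    r ≡ r' [ZMOD (p : ℤ)] ∧ s ≡ s' [ZMOD (p : ℤ)] :=
  decomposition_unique_general p hp hodd a b t r s r' s' ht hr hr' hs hs' hsum hsum'
end
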